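/- Let G be a pronilpotent profinite group and let g ∈ G have a finite right Engel sink. Then the singleton {1} is a right Engel sink of g, that is, g is a right Engel element of G. -/

import Mathlib

open scoped commutatorElement in
/-- Iterated left-normed commutator: `commIter g x n = [g, x, x, ..., x]` with `n` copies of `x`. -/
def commIter {G : Type*} [Group G] (g x : G) : ℕ → G
  | 0 => g
  | n + 1 => ⁅commIter g x n, x⁆

/-- `R` is a right Engel sink of `g`. -/
def IsRightEngelSink {G : Type*} [Group G] (g : G) (R : Set G) : Prop :=
  ∀ x : G, ∃ n₀ : ℕ, 0 < n₀ ∧ ∀ n, n₀ ≤ n → commIter g x n ∈ R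

/-- `E` is a left Engel sink of `g`. -/
def IsLeftEngelSink {G : Type*} [Group G] (g : G) (E : Set G) : Prop :=
  ∀ x : G, ∃ n₀ : ℕ, 0 < n₀ ∧ ∀ n, n₀ ≤ n → commIter x g n ∈ E

/-- A group is locally nilpotent if every finitely generated subgroup is nilpotent. -/
def IsLocallyNilpotent (G : Type*) [Group G] : Prop :=
  ∀ S : Finset G, Group.IsNilpotent ↥(Subgroup.closure (S : Set G))

/-- A topological group is pronilpotent if every quotient by an open normal subgroup
is nilpotent. -/
def IsPronilpotent (G : Type*) [Group G] [TopologicalSpace G] : Prop :=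
  ∀ (N : Subgroup G) (hN : N.Normal), IsOpen (N : Set G) →
    (haveI := hN; Group.IsNilpotent (G ⧸ N))

/-- All quotients of `G` by open normal subgroups have order coprime to `k`;
this is the coprimality condition for an automorphism of order `k` of `G`. -/
def QuotientsCoprimeTo (G : Type*) [Group G] [TopologicalSpace G] (k : ℕ) : Prop :=
  ∀ N : Subgroup G, N.Normal → IsOpen (N : Set G) → Nat.Coprime N.index k

/-- `F` is the largest closed normal pronilpotent subgroup of `G`
(the pronilpotent radical `F(G)`). -/
def IsPronilpotentRadical (G : Type*) [Group G] [TopologicalSpace G] (F : Subgroup G) : Prop :=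
  IsClosed (F : Set G) ∧ F.Normal ∧ IsPronilpotent ↥F ∧
    ∀ K : Subgroup G, IsClosed (K : Set G) → K.Normal → IsPronilpotent ↥K → K ≤ F

/-- `F2` is the second term of the pronilpotent series: the preimage in `G` of the
pronilpotent radical of `G ⧸ F`. -/
def IsSecondRadical (G : Type*) [Group G] [TopologicalSpace G] (F : Subgroup G) [F.Normal]
    (F2 : Subgroup G) : Prop :=
  ∃ Fq : Subgroup (G ⧸ F), IsPronilpotentRadical (G ⧸ F) Fq ∧
    F2 = Fq.comap (QuotientGroup.mk' F)

/-- The Frattini subgroup of a topological group: the intersection of all maximal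
open subgroups. -/
def frattiniOpen (G : Type*) [Group G] [TopologicalSpace G] : Subgroup G :=
  ⨅ (M : Subgroup G) (_ : IsOpen (M : Set G) ∧ IsCoatom M), M

/-- `γ_∞(G)`: the intersection of the closures of the lower central series. -/
def gammaInf (G : Type*) [Group G] [TopologicalSpace G] [IsTopologicalGroup G] : Subgroup G :=
  ⨅ n : ℕ, ((⊤ : Subgroup G).lowerCentralSeries n).topologicalClosure

/-- `g` is a `p`-element: the closed subgroup it topologically generates is pro-`p`. -/
def IsPElement {G : Type*} [Group G] [TopologicalSpace G] [IsTopologicalGroup G]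
    (p : ℕ) (g : G) : Prop :=
  ∀ M : Subgroup ↥((Subgroup.closure {g}).topologicalClosure),
    M.Normal → IsOpen (M : Set ↥((Subgroup.closure {g}).topologicalClosure)) →
      ∃ k : ℕ, M.index = p ^ k

/-- `K` is the Hall `p'`-subgroup of the pronilpotent group `F`: the largest closed
subgroup normal in `F` all of whose finite quotients have order coprime to `p`. -/
def IsHallPComplement (G : Type*) [Group G] [TopologicalSpace G] (p : ℕ)
    (F K : Subgroup G) : Prop :=
  K ≤ F ∧ IsClosed (K : Set G) ∧ (K.subgroupOf F).Normal ∧ QuotientsCoprimeTo ↥K p ∧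
    ∀ K' : Subgroup G, K' ≤ F → IsClosed (K' : Set G) → (K'.subgroupOf F).Normal →
      QuotientsCoprimeTo ↥K' p → K' ≤ K

/-!
A finite sink forces a repetition `commIter g x (i + p) = commIter g x i` with `p > 0`, after
which the sequence `n ↦ commIter g x n` is periodic. In a nilpotent quotient this sequence
eventually vanishes, so the periodic value is trivial modulo every open normal subgroup, hence
trivial in the profinite group, and all later terms are `1` as well.
-/

section commIter

variable {G : Type*} [Group G]

lemma commIter_add (g x : G) (m : ℕ) :
    ∀ n, commIter g x (m + n) = commIter (commIter g x m) x n
  | 0 => rfl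
  | n + 1 => by rw [← Nat.add_assoc, commIter, commIter, commIter_add g x m n]

lemma commIter_one_left (x : G) : ∀ n, commIter 1 x n = 1
  | 0 => rfl
  | n + 1 => by rw [commIter, commIter_one_left x n, commutatorElement_one_left]

lemma map_commIter {H : Type*} [Group H] (f : G →* H) (g x : G) :
    ∀ n, f (commIter g x n) = commIter (f g) (f x) n
  | 0 => rfl
  | n + 1 => by rw [commIter, commIter, map_commutatorElement, map_commIter f g x n]

lemma commIter_mem_lowerCentralSeries (g x : G) :
    ∀ n, commIter g x n ∈ (⊤ : Subgroup G).lowerCentralSeries n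
  | 0 => Subgroup.mem_top g
  | n + 1 => Subgroup.commutator_mem_commutator
      (commIter_mem_lowerCentralSeries g x n) (Subgroup.mem_top x)

lemma commIter_eq_one_of_le {g x : G} {i n : ℕ} (hi : commIter g x i = 1) (hin : i ≤ n) :
    commIter g x n = 1 := by
  obtain ⟨k, rfl⟩ := Nat.exists_eq_add_of_le hin
  rw [commIter_add, hi, commIter_one_left]

lemma commIter_add_mul_eq {g x : G} {i p : ℕ} (h : commIter g x (i + p) = commIter g x i) :
    ∀ t, commIter g x (i + t * p) = commIter g x i
  | 0 => by rw [zero_mul, add_zero]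
  | t + 1 => by
    rw [show i + (t + 1) * p = i + p + t * p by ring, commIter_add, h, ← commIter_add,
      commIter_add_mul_eq h t]

lemma commIter_eq_one_of_nilpotencyClass_le [Group.IsNilpotent G] (g x : G) {n : ℕ}
    (hn : Group.nilpotencyClass G ≤ n) : commIter g x n = 1 := by
  have hmem := commIter_mem_lowerCentralSeries g x n
  rwa [Subgroup.lowerCentralSeries_eq_bot_iff_nilpotencyClass_le.mpr hn,
    Subgroup.mem_bot] at hmem

lemma Group.IsNilpotent.commIter_eq_one_of_add_eq [Group.IsNilpotent G] {g x : G} {i p : ℕ}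
    (hp : 0 < p) (h : commIter g x (i + p) = commIter g x i) : commIter g x i = 1 := by
  rw [← commIter_add_mul_eq h (Group.nilpotencyClass G)]
  exact commIter_eq_one_of_nilpotencyClass_le g x
    ((Nat.le_mul_of_pos_right _ hp).trans (Nat.le_add_left _ _))

lemma IsRightEngelSink.exists_commIter_add_eq {g : G} {R : Set G} (hs : IsRightEngelSink g R)
    (hR : R.Finite) (x : G) : ∃ i p, 0 < p ∧ commIter g x (i + p) = commIter g x i := by
  obtain ⟨n₀, -, hmem⟩ := hs x
  obtain ⟨a, b, hab, heq⟩ := hR.exists_lt_map_eq_of_forall_mem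
    (f := fun n ↦ commIter g x (n₀ + n)) fun n ↦ hmem _ (Nat.le_add_right _ _)
  refine ⟨n₀ + a, b - a, Nat.sub_pos_of_lt hab, ?_⟩
  rw [Nat.add_assoc, Nat.add_sub_cancel' hab.le]
  exact heq.symm

end commIter

lemma eq_one_of_forall_mem_openNormalSubgroup {G : Type*} [Group G] [TopologicalSpace G]
    [IsTopologicalGroup G] [CompactSpace G] [T2Space G] [TotallyDisconnectedSpace G] {g : G}
    (hg : ∀ N : OpenNormalSubgroup G, g ∈ N) : g = 1 := by
  by_contra hne
  obtain ⟨N, hN⟩ := ProfiniteGrp.exist_openNormalSubgroup_sub_open_nhds_of_one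
    isClosed_singleton.isOpen_compl (Ne.symm hne)
  exact hN (hg N) rfl

lemma IsPronilpotent.commIter_eq_one_of_add_eq {G : Type*} [Group G] [TopologicalSpace G]
    [IsTopologicalGroup G] [CompactSpace G] [T2Space G] [TotallyDisconnectedSpace G]
    (hpn : IsPronilpotent G) {g x : G} {i p : ℕ} (hp : 0 < p)
    (h : commIter g x (i + p) = commIter g x i) : commIter g x i = 1 :=
  eq_one_of_forall_mem_openNormalSubgroup fun N ↦ by
    have := hpn N.toSubgroup N.isNormal' N.isOpen'
    change commIter g x i ∈ N.toSubgroup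
    rw [← QuotientGroup.eq_one_iff, ← QuotientGroup.mk'_apply, map_commIter]
    exact Group.IsNilpotent.commIter_eq_one_of_add_eq hp
      (by rw [← map_commIter, ← map_commIter, h])

theorem pronilpotent_finite_right_sink_trivial
    (G : Type) [Group G] [TopologicalSpace G] [IsTopologicalGroup G]
    [CompactSpace G] [T2Space G] [TotallyDisconnectedSpace G]
    (hpn : IsPronilpotent G)
    (g : G) (h : ∃ R : Set G, R.Finite ∧ IsRightEngelSink g R) :
    IsRightEngelSink g ({1} : Set G) ∧
      ∀ x : G, ∃ n : ℕ, 0 < n ∧ commIter g x n = 1 := by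
  obtain ⟨R, hR, hsink⟩ := h
  have hsink_one : IsRightEngelSink g ({1} : Set G) := fun x ↦ by
    obtain ⟨i, p, hp, hper⟩ := hsink.exists_commIter_add_eq hR x
    exact ⟨i + 1, i.succ_pos, fun n hn ↦
      commIter_eq_one_of_le (hpn.commIter_eq_one_of_add_eq hp hper) (by omega)⟩
  refine ⟨hsink_one, fun x ↦ ?_⟩
  obtain ⟨n₀, hn₀, hmem⟩ := hsink_one x
  exact ⟨n₀, hn₀, hmem n₀ le_rfl⟩
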